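/- Let K ≥ 1 and l ≥ 0 be integers and let w, b be real numbers. Then Ĩ_{C₀}(K,l;w,b) = Ĩ_{C₇}(K,l;w,b) − Ĩ_{\overline{C₁}}(K,l;w,b); explicitly, K^{−l} ∫_0^K t^l exp(−2πwt − 2πib t²) dt = K^{−l} e^{−iπ(l+1)/4} ∫_0^{√2 K} t^l exp(−2πw e^{−iπ/4} t − 2πb t²) dt + i K^{−l} ∫_0^K (K−it)^l exp(−2πw(K−it) − 2πib(K−it)²) dt. -/

import Mathlib

/-!
The integrand `f z = z ^ l * exp (-2πwz - 2πibz²)` is entire, so by Morera's theorem it has a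
primitive `F` on `ℂ`, and the integral of `f` along any parametrised segment is the difference of
the values of `F` at its endpoints. The three integrals are the segments `[0, K]`, `[0, K - iK]`
and `[K, K - iK]` of the triangle, so the identity reduces to
`F K - F 0 = (F (K - iK) - F 0) - (F (K - iK) - F K)`. For the diagonal, `ζ = e^{-iπ/4}` satisfies
`√2 ζ = 1 - i` and `ζ² = -i`; the latter turns `-2πib (tζ)²` into `-2πbt²`.
-/

open Complex

section

variable {E : Type*} [NormedAddCommGroup E] [NormedSpace ℂ E] [CompleteSpace E]

theorem intervalIntegral.integral_smul_comp_line_eq_sub {F f : ℂ → E}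
    (hF : ∀ z, HasDerivAt F (f z) z) (hf : Continuous f) (z₀ c : ℂ) (a b : ℝ) :
    ∫ t in a..b, c • f (z₀ + t * c) = F (z₀ + b * c) - F (z₀ + a * c) := by
  refine intervalIntegral.integral_eq_sub_of_hasDerivAt (f := fun t : ℝ => F (z₀ + t * c))
    (fun t _ => ?_)
    ((by fun_prop : Continuous fun t : ℝ => c • f (z₀ + t * c)).intervalIntegrable _ _)
  have hline : HasDerivAt (fun z : ℂ => z₀ + z * c) c t := by
    simpa using ((hasDerivAt_id (t : ℂ)).mul_const c).const_add z₀
  exact (hF _).scomp t hline.comp_ofReal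

end

theorem sqrt_two_mul_exp_neg_pi_div_four_mul_I :
    (Real.sqrt 2 : ℂ) * exp (-I * Real.pi / 4) = 1 - I := by
  rw [show -I * Real.pi / 4 = ((-(Real.pi / 4) : ℝ) : ℂ) * I by push_cast; ring, exp_mul_I,
    ← ofReal_cos, ← ofReal_sin, Real.cos_neg, Real.sin_neg, Real.cos_pi_div_four,
    Real.sin_pi_div_four]
  push_cast
  linear_combination (1 / 2 - I / 2) * (by norm_cast; simp : (Real.sqrt 2 : ℂ) ^ 2 = 2)

theorem exp_neg_pi_div_four_mul_I_sq : exp (-I * Real.pi / 4) ^ 2 = -I := by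
  have h := congrArg (· ^ 2) sqrt_two_mul_exp_neg_pi_div_four_mul_I
  have h2 : (Real.sqrt 2 : ℂ) ^ 2 = 2 := by norm_cast; simp
  simp only [mul_pow, h2] at h
  linear_combination h / 2 + I_sq / 2

noncomputable def monomialMulExpQuadratic (l : ℕ) (w b : ℝ) (z : ℂ) : ℂ :=
  z ^ l * exp (-2 * Real.pi * w * z - 2 * Real.pi * I * b * z ^ 2)

theorem differentiable_monomialMulExpQuadratic (l : ℕ) (w b : ℝ) :
    Differentiable ℂ (monomialMulExpQuadratic l w b) := by
  unfold monomialMulExpQuadratic; fun_prop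

theorem exp_neg_pi_div_four_mul_I_mul_monomialMulExpQuadratic (l : ℕ) (w b t : ℝ) :
    exp (-I * Real.pi / 4) * monomialMulExpQuadratic l w b (t * exp (-I * Real.pi / 4))
      = exp (-I * Real.pi * ((l : ℂ) + 1) / 4) *
        ((t : ℂ) ^ l *
          exp (-2 * Real.pi * w * exp (-I * Real.pi / 4) * t - 2 * Real.pi * b * t ^ 2)) := by
  have hpow : exp (-I * Real.pi * ((l : ℂ) + 1) / 4) = exp (-I * Real.pi / 4) ^ (l + 1) := by
    rw [← exp_nat_mul]; push_cast; ring_nf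
  have harg : -2 * Real.pi * w * (t * exp (-I * Real.pi / 4)) -
        2 * Real.pi * I * b * (t * exp (-I * Real.pi / 4)) ^ 2
      = -2 * Real.pi * w * exp (-I * Real.pi / 4) * t - 2 * Real.pi * b * t ^ 2 := by
    rw [mul_pow, exp_neg_pi_div_four_mul_I_sq]
    linear_combination (2 * Real.pi * b * t ^ 2 : ℂ) * I_sq
  rw [monomialMulExpQuadratic, harg, hpow]
  ring

theorem ItC0_eq_ItC7_sub_ItC1bar (K : ℕ) (l : ℕ) (w b : ℝ) :
    ((K : ℂ) ^ l)⁻¹ * ∫ t in (0 : ℝ)..(K : ℝ), (t : ℂ) ^ l *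
        Complex.exp (-2 * (Real.pi : ℂ) * (w : ℂ) * (t : ℂ) -
          2 * (Real.pi : ℂ) * Complex.I * (b : ℂ) * (t : ℂ) ^ 2)
      = ((K : ℂ) ^ l)⁻¹ * Complex.exp (-(Complex.I) * (Real.pi : ℂ) * ((l : ℂ) + 1) / 4) *
          (∫ t in (0 : ℝ)..(Real.sqrt 2 * K), (t : ℂ) ^ l *
            Complex.exp (-2 * (Real.pi : ℂ) * (w : ℂ) *
                Complex.exp (-(Complex.I) * (Real.pi : ℂ) / 4) * (t : ℂ) -
              2 * (Real.pi : ℂ) * (b : ℂ) * (t : ℂ) ^ 2))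
        + Complex.I * ((K : ℂ) ^ l)⁻¹ *
          ∫ t in (0 : ℝ)..(K : ℝ), ((K : ℂ) - Complex.I * (t : ℂ)) ^ l *
            Complex.exp (-2 * (Real.pi : ℂ) * (w : ℂ) *
                ((K : ℂ) - Complex.I * (t : ℂ)) -
              2 * (Real.pi : ℂ) * Complex.I * (b : ℂ) *
                ((K : ℂ) - Complex.I * (t : ℂ)) ^ 2) := by
  set f := monomialMulExpQuadratic l w b
  have hf : Differentiable ℂ f := differentiable_monomialMulExpQuadratic l w b
  obtain ⟨F, hF⟩ := hf.isExactOn_univ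
  have segment := intervalIntegral.integral_smul_comp_line_eq_sub (fun z => hF z trivial)
    hf.continuous
  have hC0 : ∫ t in (0 : ℝ)..K, f t = F K - F 0 := by
    simpa using segment 0 1 0 K
  have hC7 : exp (-I * Real.pi * ((l : ℂ) + 1) / 4) *
      (∫ t in (0 : ℝ)..(Real.sqrt 2 * K), (t : ℂ) ^ l *
        exp (-2 * Real.pi * w * exp (-I * Real.pi / 4) * t - 2 * Real.pi * b * t ^ 2))
      = F (K - I * K) - F 0 := by
    have hvertex : ((Real.sqrt 2 * K : ℝ) : ℂ) * exp (-I * Real.pi / 4) = K - I * K := by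
      push_cast
      linear_combination (K : ℂ) * sqrt_two_mul_exp_neg_pi_div_four_mul_I
    have := segment 0 (exp (-I * Real.pi / 4)) 0 (Real.sqrt 2 * K)
    simp only [zero_add, smul_eq_mul, ofReal_zero, zero_mul, hvertex] at this
    rw [← intervalIntegral.integral_const_mul, ← this]
    simp_rw [← exp_neg_pi_div_four_mul_I_mul_monomialMulExpQuadratic]
    rfl
  have hC1 : I * ∫ t in (0 : ℝ)..K, f (K - I * t) = F K - F (K - I * K) := by
    have hline : ∀ z : ℂ, (K : ℂ) + z * -I = K - I * z := fun z => by ring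
    have := segment K (-I) 0 K
    simp only [smul_eq_mul, intervalIntegral.integral_const_mul, ofReal_zero, zero_mul,
      add_zero, hline] at this
    linear_combination -this
  simp only [f, monomialMulExpQuadratic] at hC0 hC1
  linear_combination ((K : ℂ) ^ l)⁻¹ * (hC0 - hC7 - hC1)
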